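/- Let G be an interval graph and let S and S' be distinct c-colorable sets of size at least k, neither of which is locked in G. If exactly one of S and S' is locked in G[S ∪ S'], then the minimum length of a TAR(k)-reconfiguration sequence between S and S' equals |S △ S'| + 2. -/

import Mathlib

/-!
Lower bound: a TAR step changes `|X ∆ S'|` by exactly one, and the first step out of `S`, locked
in `G[S ∪ S']`, can neither delete a vertex (the size would drop below `k`) nor add one of `S'`
(lockedness), so it moves away from `S'`; hence at least `|S ∆ S'| + 2` steps are needed.

Upper bound: in an interval graph a set is `c`-colorable iff no point lies in more than `c` of
its intervals. As `S` is not locked in `G`, it first grows by a vertex outside `S ∪ S'`. Between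
two sets neither of which is locked in their union, a greedy sequence of length `|A ∆ B|` exists:
add a vertex of the other set when possible, and otherwise exchange the vertex of `A ∆ B` with
the leftmost right endpoint against a vertex it can replace.
-/

open Finset

variable {V : Type*}

/-- `S` is a `c`-colorable vertex set in `G`. -/
def ColSet (G : SimpleGraph V) (c : ℕ) (S : Finset V) : Prop :=
  (G.induce (S : Set V)).Colorable c

/-- One TAR(k) step between `c`-colorable sets. -/
def TARStep (G : SimpleGraph V) (c k : ℕ) [DecidableEq V] (A B : Finset V) : Prop :=
  ColSet G c A ∧ ColSet G c B ∧ k ≤ A.card ∧ k ≤ B.card ∧ (symmDiff A B).card = 1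

/-- One TJ step between `c`-colorable sets. -/
def TJStep (G : SimpleGraph V) (c : ℕ) [DecidableEq V] (A B : Finset V) : Prop :=
  ColSet G c A ∧ ColSet G c B ∧ (A \ B).card = 1 ∧ (B \ A).card = 1

/-- `l` is a TAR(k)-reconfiguration sequence from `S` to `S'`. -/
def TARSeq (G : SimpleGraph V) (c k : ℕ) [DecidableEq V] (S S' : Finset V)
    (l : List (Finset V)) : Prop :=
  l.head? = some S ∧ l.getLast? = some S' ∧ l.Chain' (TARStep G c k)

def TJSeq (G : SimpleGraph V) (c : ℕ) [DecidableEq V] (S S' : Finset V)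
    (l : List (Finset V)) : Prop :=
  l.head? = some S ∧ l.getLast? = some S' ∧ l.Chain' (TJStep G c)

def TARReach (G : SimpleGraph V) (c k : ℕ) [DecidableEq V] (S S' : Finset V) : Prop :=
  ∃ l, TARSeq G c k S S' l

def TJReach (G : SimpleGraph V) (c : ℕ) [DecidableEq V] (S S' : Finset V) : Prop :=
  ∃ l, TJSeq G c S S' l

/-- Length of a shortest TAR(k)-sequence (number of steps), `⊤` if none exists. -/
noncomputable def TARDist (G : SimpleGraph V) (c k : ℕ) [DecidableEq V]
    (S S' : Finset V) : ℕ∞ :=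
  sInf {n : ℕ∞ | ∃ l, TARSeq G c k S S' l ∧ (l.length : ℕ∞) = n + 1}

noncomputable def TJDist (G : SimpleGraph V) (c : ℕ) [DecidableEq V]
    (S S' : Finset V) : ℕ∞ :=
  sInf {n : ℕ∞ | ∃ l, TJSeq G c S S' l ∧ (l.length : ℕ∞) = n + 1}

/-- `S` is a maximal `c`-colorable set among subsets of `U`, of size exactly `k`
(`S` is "locked" in `G[U]`). -/
def LockedIn (G : SimpleGraph V) (c k : ℕ) (U S : Finset V) : Prop :=
  S.card = k ∧ ColSet G c S ∧ S ⊆ U ∧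
    ∀ T ⊆ U, ColSet G c T → S ⊆ T → T = S

/-- `S` is locked in `G` itself. -/
def Locked [Fintype V] (G : SimpleGraph V) (c k : ℕ) (S : Finset V) : Prop :=
  LockedIn G c k Finset.univ S

/-- `G` is an interval graph. -/
def IsIntervalGraph (G : SimpleGraph V) : Prop :=
  ∃ l r : V → ℝ, (∀ v, l v ≤ r v) ∧
    ∀ u v, G.Adj u v ↔ u ≠ v ∧ max (l u) (l v) ≤ min (r u) (r v)

/-- `G` is perfect: every induced subgraph has chromatic number equal to its
clique number, stated via the colorability/clique-free characterization. -/
def IsPerfect (G : SimpleGraph V) : Prop :=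
  ∀ (S : Set V) (c : ℕ), (G.induce S).Colorable c ↔ (G.induce S).CliqueFree (c + 1)

open scoped symmDiff

section FinsetSymmDiff
variable [DecidableEq V] {A B : Finset V} {u : V}

lemma card_symmDiff_eq_one_iff :
    #(A ∆ B) = 1 ↔ (∃ u ∉ A, B = insert u A) ∨ ∃ u ∈ A, B = A.erase u := by
  constructor
  · intro h
    obtain ⟨u, hu⟩ := card_eq_one.1 h
    have hB : B = A ∆ {u} := by rw [← hu, symmDiff_symmDiff_cancel_left]
    by_cases huA : u ∈ A
    · refine Or.inr ⟨u, huA, hB.trans ?_⟩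
      ext x; by_cases hx : x = u <;> simp [mem_symmDiff, hx, huA]
    · refine Or.inl ⟨u, huA, hB.trans ?_⟩
      ext x; by_cases hx : x = u <;> simp [mem_symmDiff, hx, huA]
  · rintro (⟨u, huA, rfl⟩ | ⟨u, huA, rfl⟩) <;> refine card_eq_one.2 ⟨u, ?_⟩ <;>
      ext x <;> by_cases hx : x = u <;> simp [mem_symmDiff, hx, huA]

lemma card_symmDiff_insert_of_notMem (huA : u ∉ A) (huB : u ∉ B) :
    #(insert u A ∆ B) = #(A ∆ B) + 1 := by
  have : insert u A ∆ B = insert u (A ∆ B) := by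
    ext x; by_cases hx : x = u <;> simp [mem_symmDiff, hx, huA, huB]
  rw [this, card_insert_of_notMem (by simp [mem_symmDiff, huA, huB])]

lemma card_symmDiff_insert_of_mem (huA : u ∉ A) (huB : u ∈ B) :
    #(insert u A ∆ B) + 1 = #(A ∆ B) := by
  have : insert u A ∆ B = (A ∆ B).erase u := by
    ext x; by_cases hx : x = u <;> simp [mem_symmDiff, hx, huA, huB]
  rw [this, card_erase_add_one (by simp [mem_symmDiff, huA, huB])]

lemma card_symmDiff_erase_of_notMem (huA : u ∈ A) (huB : u ∉ B) :
    #(A.erase u ∆ B) + 1 = #(A ∆ B) := by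
  have : A.erase u ∆ B = (A ∆ B).erase u := by
    ext x; by_cases hx : x = u <;> simp [mem_symmDiff, hx, huA, huB]
  rw [this, card_erase_add_one (by simp [mem_symmDiff, huA, huB])]

end FinsetSymmDiff

section Colorable
variable {G : SimpleGraph V} {c : ℕ} {X Y : Finset V}

lemma colSet_iff_exists_nat_coloring :
    ColSet G c X ↔ ∃ f : V → ℕ, (∀ v ∈ X, f v < c) ∧
      ∀ u ∈ X, ∀ v ∈ X, G.Adj u v → f u ≠ f v := by
  classical
  constructor
  · rintro ⟨C⟩
    refine ⟨fun v => if hv : v ∈ X then C ⟨v, hv⟩ else 0, fun v hv => by simp [hv],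
      fun u hu v hv huv => ?_⟩
    have hC := C.valid (show (G.induce (X : Set V)).Adj ⟨u, hu⟩ ⟨v, hv⟩ from huv)
    simpa [hu, hv, Fin.val_inj] using hC
  · rintro ⟨f, hfc, hf⟩
    exact ⟨SimpleGraph.Coloring.mk (fun v => ⟨f v, hfc v v.2⟩)
      fun {u v} huv => by simpa [Fin.ext_iff] using hf u u.2 v v.2 huv⟩

lemma ColSet.mono (hY : ColSet G c Y) (h : X ⊆ Y) : ColSet G c X := by
  obtain ⟨f, hfc, hf⟩ := colSet_iff_exists_nat_coloring.1 hY
  exact colSet_iff_exists_nat_coloring.2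
    ⟨f, fun v hv => hfc v (h hv), fun u hu v hv => hf u (h hu) v (h hv)⟩

lemma colSet_empty : ColSet G c ∅ :=
  colSet_iff_exists_nat_coloring.2 ⟨0, by simp, by simp⟩

lemma ColSet.insert [DecidableEq V] [DecidableRel G.Adj] (hX : ColSet G c X) {v : V}
    (hv : #{u ∈ X | G.Adj u v} < c) : ColSet G c (insert v X) := by
  obtain ⟨f, hfc, hf⟩ := colSet_iff_exists_nat_coloring.1 hX
  obtain ⟨i, hic, hi⟩ := exists_mem_notMem_of_card_lt_card
    (s := {u ∈ X | G.Adj u v}.image f) (t := range c)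
    (card_image_le.trans_lt (by simpa using hv))
  have hnbr : ∀ u ∈ X, G.Adj u v → f u ≠ i := fun u hu huv hfu =>
    hi (mem_image.2 ⟨u, mem_filter.2 ⟨hu, huv⟩, hfu⟩)
  refine colSet_iff_exists_nat_coloring.2 ⟨Function.update f v i, ?_, ?_⟩
  · intro u hu
    rcases eq_or_ne u v with rfl | huv
    · simpa using hic
    · simpa [huv] using hfc u ((mem_insert.1 hu).resolve_left huv)
  · intro u hu w hw huw
    have hne := huw.ne
    rcases eq_or_ne u v with rfl | hu'
    · simpa [hne.symm] using (hnbr w ((mem_insert.1 hw).resolve_left hne.symm) huw.symm).symm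
    rcases eq_or_ne w v with rfl | hw'
    · simpa [hu'] using hnbr u ((mem_insert.1 hu).resolve_left hu') huw
    simpa [hu', hw'] using hf u ((mem_insert.1 hu).resolve_left hu') w
      ((mem_insert.1 hw).resolve_left hw') huw

end Colorable

section IntervalDepth
variable (l r : V → ℝ)

noncomputable def depth (X : Finset V) (p : ℝ) : ℕ := #{v ∈ X | l v ≤ p ∧ p ≤ r v}

variable {l r} {X Y : Finset V} {p : ℝ} {c : ℕ}

lemma depth_mono (h : X ⊆ Y) : depth l r X p ≤ depth l r Y p :=
  card_le_card (filter_subset_filter _ h)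

lemma depth_insert_le [DecidableEq V] (z : V) :
    depth l r (insert z X) p ≤ depth l r X p + 1 := by
  unfold depth; rw [filter_insert]; split_ifs
  exacts [card_insert_le _ _, Nat.le_succ _]

lemma depth_insert_of_notMem_Icc [DecidableEq V] {z : V} (hz : ¬ (l z ≤ p ∧ p ≤ r z)) :
    depth l r (insert z X) p = depth l r X p := by
  unfold depth; rw [filter_insert, if_neg hz]

lemma depth_erase_add_one [DecidableEq V] {a : V} (ha : a ∈ X) (hp : l a ≤ p ∧ p ≤ r a) :
    depth l r (X.erase a) p + 1 = depth l r X p := by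
  unfold depth; rw [filter_erase]; exact card_erase_add_one (mem_filter.2 ⟨ha, hp⟩)

lemma exists_max_left_endpoint (hX : X.Nonempty) (hp : ∀ v ∈ X, l v ≤ p ∧ p ≤ r v) :
    ∃ v ∈ X, l v ≤ p ∧ ∀ u ∈ X, l u ≤ l v ∧ l v ≤ r u := by
  obtain ⟨v, hv, hmax⟩ := exists_max_image X l hX
  exact ⟨v, hv, (hp v hv).1, fun u hu => ⟨hmax u hu, (hp v hv).1.trans (hp u hu).2⟩⟩

lemma exists_left_endpoint_of_lt_depth_insert [DecidableEq V] {z : V} {q : ℝ}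
    (hX : ∀ p, depth l r X p ≤ c) (hq : c < depth l r (insert z X) q) :
    q ≤ r z ∧ ∃ v ∈ insert z X, l v ≤ q ∧ l z ≤ l v ∧ c ≤ depth l r X (l v) := by
  have hzq : l z ≤ q ∧ q ≤ r z := by
    by_contra hz
    rw [depth_insert_of_notMem_Icc hz] at hq
    exact (hX q).not_gt hq
  set F := (insert z X).filter (fun v => l v ≤ q ∧ q ≤ r v)
  have hzF : z ∈ F := mem_filter.2 ⟨mem_insert_self z X, hzq⟩
  obtain ⟨v, hvF, hvq, hv⟩ :=
    exists_max_left_endpoint ⟨z, hzF⟩ fun u hu => (mem_filter.1 hu).2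
  refine ⟨hzq.2, v, (mem_filter.1 hvF).1, hvq, (hv z hzF).1, ?_⟩
  have hsub : F.erase z ⊆ X.filter (fun u => l u ≤ l v ∧ l v ≤ r u) := fun u hu => by
    obtain ⟨huz, huF⟩ := mem_erase.1 hu
    exact mem_filter.2 ⟨(mem_insert.1 (mem_filter.1 huF).1).resolve_left huz, hv u huF⟩
  have hFq : #F = depth l r (insert z X) q := rfl
  have hsub' := card_le_card hsub
  have hzF' := card_erase_add_one hzF
  unfold depth
  omega

/-- Let `p` be the leftmost point of `[l z, r z]` covered `c` times by `A`; as `B ∋ z` covers it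
at most `c` times, some `a ∈ A \ B` covers `p`. If `insert z (A.erase a)` were too deep at `q`,
there would be such a point in `[p, q]`, so `a`, reaching from `p` past `r z ≥ q`, would cover
`q`, and the exchange would not increase the depth at `q`. -/
lemma exists_exchange [DecidableEq V] {A B : Finset V} {z : V} (hA : ∀ p, depth l r A p ≤ c)
    (hB : ∀ p, depth l r B p ≤ c) (hzB : z ∈ B) (hzA : z ∉ A)
    (hz : ¬ ∀ p, depth l r (insert z A) p ≤ c) (hmin : ∀ y ∈ A \ B, r z ≤ r y) :
    ∃ a ∈ A \ B, ∀ p, depth l r (insert z (A.erase a)) p ≤ c := by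
  set D := ((insert z A).image l).filter fun p => l z ≤ p ∧ p ≤ r z ∧ c ≤ depth l r A p
  have hD : D.Nonempty := by
    obtain ⟨q, hq⟩ := not_forall.1 hz
    obtain ⟨hqz, v, hv, hvq, hzv, hcv⟩ :=
      exists_left_endpoint_of_lt_depth_insert hA (not_le.1 hq)
    exact ⟨l v, mem_filter.2 ⟨mem_image_of_mem l hv, hzv, hvq.trans hqz, hcv⟩⟩
  obtain ⟨hpz, hpz', hpA⟩ := (mem_filter.1 (D.min'_mem hD)).2
  set p := D.min' hD
  have hcover : ∃ a ∈ A \ B, l a ≤ p ∧ p ≤ r a := by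
    by_contra! h
    have hsub : A.filter (fun v => l v ≤ p ∧ p ≤ r v) ⊆
        (B.filter (fun v => l v ≤ p ∧ p ≤ r v)).erase z := fun v hv => by
      obtain ⟨hvA, hvp⟩ := mem_filter.1 hv
      refine mem_erase.2 ⟨fun hvz => hzA (hvz ▸ hvA), mem_filter.2 ⟨?_, hvp⟩⟩
      by_contra hvB
      exact (h v (mem_sdiff.2 ⟨hvA, hvB⟩) hvp.1).not_ge hvp.2
    have := card_le_card hsub
    have := card_erase_add_one (s := B.filter (fun v => l v ≤ p ∧ p ≤ r v))
      (mem_filter.2 ⟨hzB, hpz, hpz'⟩)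
    have := hB p
    unfold depth at hpA this
    omega
  obtain ⟨a, ha, hap, hpa⟩ := hcover
  obtain ⟨haA, haB⟩ := mem_sdiff.1 ha
  refine ⟨a, ha, fun q => ?_⟩
  by_contra! hq
  have hAa : ∀ p, depth l r (A.erase a) p ≤ c := fun p =>
    (depth_mono (erase_subset a A)).trans (hA p)
  obtain ⟨hqz, v, hv, hvq, hzv, hcv⟩ := exists_left_endpoint_of_lt_depth_insert hAa hq
  have hvD : l v ∈ D := by
    refine mem_filter.2 ⟨mem_image_of_mem l (insert_subset_insert z (erase_subset a A) hv), hzv,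
      hvq.trans hqz, hcv.trans (depth_mono (erase_subset a A))⟩
  have haq : l a ≤ q ∧ q ≤ r a :=
    ⟨hap.trans ((D.min'_le _ hvD).trans hvq), hqz.trans (hmin a ha)⟩
  have := depth_insert_le (l := l) (r := r) (p := q) (X := A.erase a) z
  have := depth_erase_add_one haA haq
  have := hA q
  omega

end IntervalDepth

section IntervalGraph
variable {G : SimpleGraph V} {l r : V → ℝ} {c : ℕ}

variable (G l r) in
def IsIntervalModel : Prop :=
  (∀ v, l v ≤ r v) ∧ ∀ u v, G.Adj u v ↔ u ≠ v ∧ max (l u) (l v) ≤ min (r u) (r v)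

lemma depth_le_of_colSet (hG : IsIntervalModel G l r) {X : Finset V} (hX : ColSet G c X)
    (p : ℝ) : depth l r X p ≤ c := by
  obtain ⟨f, hfc, hf⟩ := colSet_iff_exists_nat_coloring.1 hX
  have := card_le_card_of_injOn (s := X.filter fun v => l v ≤ p ∧ p ≤ r v) (t := range c) f
    (fun v hv => mem_range.2 (hfc v (mem_filter.1 hv).1)) fun u hu v hv huv => by
      obtain ⟨huX, hup⟩ := mem_filter.1 hu
      obtain ⟨hvX, hvp⟩ := mem_filter.1 hv
      by_contra hne
      exact hf u huX v hvX ((hG.2 u v).2 ⟨hne, by grind⟩) huv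
  simpa [depth] using this

lemma colSet_of_depth_le (hG : IsIntervalModel G l r) (X : Finset V) :
    (∀ p, depth l r X p ≤ c) → ColSet G c X := by
  classical
  induction X using induction_on_max_value l with
  | empty => exact fun _ => colSet_empty
  | insert a X haX hmax ih =>
    intro hdepth
    refine (ih fun p => (depth_mono (subset_insert a X)).trans (hdepth p)).insert ?_
    -- every neighbour `u` of `a` in `X` has `l u ≤ l a ≤ r u`, so all of them meet at `l a`
    have hsub : insert a {u ∈ X | G.Adj u a} ⊆
        (insert a X).filter (fun v => l v ≤ l a ∧ l a ≤ r v) := by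
      intro u hu
      rcases mem_insert.1 hu with rfl | hu
      · exact mem_filter.2 ⟨mem_insert_self _ _, le_rfl, hG.1 u⟩
      · obtain ⟨huX, hua⟩ := mem_filter.1 hu
        have := ((hG.2 u a).1 hua).2
        exact mem_filter.2 ⟨mem_insert_of_mem huX, hmax u huX, by grind⟩
    have := card_le_card hsub
    rw [card_insert_of_notMem fun h => haX (mem_filter.1 h).1] at this
    have := hdepth (l a)
    unfold depth at this
    omega

lemma colSet_iff_depth_le (hG : IsIntervalModel G l r) {X : Finset V} :
    ColSet G c X ↔ ∀ p, depth l r X p ≤ c :=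
  ⟨depth_le_of_colSet hG, colSet_of_depth_le hG X⟩

end IntervalGraph

section Reconfiguration
variable [DecidableEq V] {G : SimpleGraph V} {c k : ℕ} {A B X : Finset V}

lemma TARStep.symm (h : TARStep G c k A B) : TARStep G c k B A :=
  ⟨h.2.1, h.1, h.2.2.2.1, h.2.2.1, by rw [symmDiff_comm]; exact h.2.2.2.2⟩

lemma tarStep_insert (hA : ColSet G c A) (hkA : k ≤ #A) {u : V} (huA : u ∉ A)
    (hu : ColSet G c (insert u A)) : TARStep G c k A (insert u A) :=
  ⟨hA, hu, hkA, hkA.trans (card_le_card (subset_insert u A)),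
    card_symmDiff_eq_one_iff.2 (Or.inl ⟨u, huA, rfl⟩)⟩

lemma tarStep_erase (hA : ColSet G c A) (hkA : k < #A) {u : V} (huA : u ∈ A) :
    TARStep G c k A (A.erase u) :=
  ⟨hA, hA.mono (erase_subset u A), hkA.le, by rw [card_erase_of_mem huA]; omega,
    card_symmDiff_eq_one_iff.2 (Or.inr ⟨u, huA, rfl⟩)⟩

lemma not_tarSeq_nil : ¬ TARSeq G c k A B [] := by simp [TARSeq]

lemma tarSeq_singleton {Y : Finset V} : TARSeq G c k A B [Y] ↔ Y = A ∧ Y = B :=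
  ⟨fun h => ⟨by simpa using h.1, by simpa using h.2.1⟩,
    fun ⟨hA, hB⟩ => ⟨by simp [hA], by simp [hB], List.isChain_singleton Y⟩⟩

lemma tarSeq_cons_cons {Y Z : Finset V} {t : List (Finset V)} :
    TARSeq G c k A B (Y :: Z :: t) ↔
      Y = A ∧ TARStep G c k A Z ∧ TARSeq G c k Z B (Z :: t) := by
  rw [TARSeq, TARSeq, List.getLast?_cons_cons]
  constructor
  · rintro ⟨hY, hlast, hchain⟩
    obtain rfl : Y = A := by simpa using hY
    obtain ⟨hstep, hchain⟩ := List.isChain_cons_cons.1 hchain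
    exact ⟨rfl, hstep, rfl, hlast, hchain⟩
  · rintro ⟨rfl, hstep, -, hlast, hchain⟩
    exact ⟨rfl, hlast, List.isChain_cons_cons.2 ⟨hstep, hchain⟩⟩

lemma TARSeq.cons {L : List (Finset V)} (hstep : TARStep G c k A X) (h : TARSeq G c k X B L) :
    TARSeq G c k A B (A :: L) := by
  match L, h with
  | [], h => exact absurd h not_tarSeq_nil
  | Y :: t, h =>
    obtain rfl : Y = X := by simpa [TARSeq] using h.1
    exact tarSeq_cons_cons.2 ⟨rfl, hstep, h⟩

lemma TARSeq.reverse {L : List (Finset V)} (h : TARSeq G c k A B L) :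
    TARSeq G c k B A L.reverse := by
  obtain ⟨hhead, hlast, hchain⟩ := h
  refine ⟨by rwa [List.head?_reverse], by rwa [List.getLast?_reverse], ?_⟩
  exact List.isChain_reverse.2 (hchain.imp fun _ _ h => h.symm)

lemma TARSeq.card_symmDiff_lt_length {L : List (Finset V)} (h : TARSeq G c k A B L) :
    #(A ∆ B) < L.length := by
  induction L generalizing A with
  | nil => exact absurd h not_tarSeq_nil
  | cons Y t ih =>
    cases t with
    | nil =>
      obtain ⟨rfl, rfl⟩ := tarSeq_singleton.1 h
      simp
    | cons Z t =>
      obtain ⟨rfl, hstep, hseq⟩ := tarSeq_cons_cons.1 h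
      have htri : #(Y ∆ B) ≤ #(Y ∆ Z) + #(Z ∆ B) :=
        (card_le_card (symmDiff_triangle Y Z B)).trans (card_union_le _ _)
      have hlen := ih hseq
      have hstep1 := hstep.2.2.2.2
      simp only [List.length_cons] at hlen ⊢
      omega

lemma tarDist_comm : TARDist G c k A B = TARDist G c k B A := by
  have key : ∀ {A B : Finset V}, TARDist G c k B A ≤ TARDist G c k A B := fun {A B} =>
    le_sInf fun _ ⟨L, hL, hlen⟩ =>
      sInf_le ⟨L.reverse, hL.reverse, by rwa [List.length_reverse]⟩
  exact le_antisymm key key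

lemma le_tarDist {n : ℕ} (h : ∀ L, TARSeq G c k A B L → n + 1 ≤ L.length) :
    (n : ℕ∞) ≤ TARDist G c k A B := by
  refine le_sInf fun m ⟨L, hL, hlen⟩ => ?_
  have hn := h L hL
  induction m using ENat.recTopCoe with
  | top => exact le_top
  | coe m =>
    norm_cast at hlen
    exact_mod_cast (by omega : n ≤ m)

variable (G c k) in
def TARPath (A B : Finset V) (n : ℕ) : Prop :=
  ∃ L, TARSeq G c k A B L ∧ L.length = n + 1

lemma TARPath.refl : TARPath G c k A A 0 := ⟨[A], tarSeq_singleton.2 ⟨rfl, rfl⟩, rfl⟩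

lemma TARPath.cons {n : ℕ} (hstep : TARStep G c k A X) (h : TARPath G c k X B n) :
    TARPath G c k A B (n + 1) :=
  let ⟨L, hL, hlen⟩ := h
  ⟨A :: L, hL.cons hstep, by simp [hlen]⟩

lemma TARPath.symm {n : ℕ} (h : TARPath G c k A B n) : TARPath G c k B A n :=
  let ⟨L, hL, hlen⟩ := h
  ⟨L.reverse, hL.reverse, by simp [hlen]⟩

lemma TARPath.tarDist_le {n : ℕ} (h : TARPath G c k A B n) : TARDist G c k A B ≤ n :=
  let ⟨L, hL, hlen⟩ := h
  sInf_le ⟨L, hL, by simp [hlen]⟩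

end Reconfiguration

section Locking
variable {G : SimpleGraph V} {c k : ℕ} {U A B S S' : Finset V}

lemma LockedIn.of_subset {U' : Finset V} (h : LockedIn G c k U' A) (hAU : A ⊆ U)
    (hUU' : U ⊆ U') :
    LockedIn G c k U A :=
  ⟨h.1, h.2.1, hAU, fun T hTU => h.2.2.2 T (hTU.trans hUU')⟩

variable [DecidableEq V]

lemma exists_insert_of_not_lockedIn (h : ¬ LockedIn G c k U A) (hcard : #A = k)
    (hA : ColSet G c A) (hAU : A ⊆ U) : ∃ v ∈ U \ A, ColSet G c (insert v A) := by
  by_contra! hnone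
  refine h ⟨hcard, hA, hAU, fun T hTU hT hAT => ?_⟩
  by_contra hne
  obtain ⟨v, hvT, hvA⟩ := exists_of_ssubset (ssubset_of_subset_of_ne hAT (Ne.symm hne))
  exact hnone v (mem_sdiff.2 ⟨hTU hvT, hvA⟩) (hT.mono (insert_subset hvT hAT))

lemma LockedIn.notMem_of_colSet_insert (h : LockedIn G c k (S ∪ S') S) {u : V} (huS : u ∉ S)
    (hu : ColSet G c (insert u S)) : u ∉ S' := fun huS' =>
  huS (h.2.2.2 _ (insert_subset (mem_union_right S huS') subset_union_left) hu
    (subset_insert u S) ▸ mem_insert_self u S)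

lemma LockedIn.card_symmDiff_of_tarStep (h : LockedIn G c k (S ∪ S') S) {X : Finset V}
    (hstep : TARStep G c k S X) : #(X ∆ S') = #(S ∆ S') + 1 := by
  rcases card_symmDiff_eq_one_iff.1 hstep.2.2.2.2 with ⟨u, huS, rfl⟩ | ⟨u, huS, rfl⟩
  · exact card_symmDiff_insert_of_notMem huS (h.notMem_of_colSet_insert huS hstep.2.1)
  · have := hstep.2.2.2.1
    have := card_erase_add_one huS
    have := h.1
    omega

lemma LockedIn.card_symmDiff_add_three_le_length (h : LockedIn G c k (S ∪ S') S) (hne : S ≠ S')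
    {L : List (Finset V)} (hL : TARSeq G c k S S' L) : #(S ∆ S') + 3 ≤ L.length := by
  match L, hL with
  | [], hL => exact absurd hL not_tarSeq_nil
  | [_], hL => exact absurd ((tarSeq_singleton.1 hL).1.symm.trans (tarSeq_singleton.1 hL).2) hne
  | _ :: X :: t, hL =>
    obtain ⟨rfl, hstep, hseq⟩ := tarSeq_cons_cons.1 hL
    have := hseq.card_symmDiff_lt_length
    rw [h.card_symmDiff_of_tarStep hstep] at this
    simp only [List.length_cons] at this ⊢
    omega

variable (G c k) in
def Unlocked (A B : Finset V) : Prop :=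
  ColSet G c A ∧ k ≤ #A ∧ ¬ LockedIn G c k (A ∪ B) A

lemma unlocked_of_lt (hA : ColSet G c A) (hk : k < #A) : Unlocked G c k A B :=
  ⟨hA, hk.le, fun h => hk.ne h.1.symm⟩

lemma Unlocked.mono_right {B' : Finset V} (h : Unlocked G c k A B) (hB : B ⊆ B') :
    Unlocked G c k A B' :=
  ⟨h.1, h.2.1, fun hl => h.2.2 (hl.of_subset subset_union_left (union_subset_union le_rfl hB))⟩

lemma Unlocked.lt_or_exists_insert (h : Unlocked G c k A B) :
    k < #A ∨ ∃ w ∈ B \ A, ColSet G c (insert w A) := by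
  refine (h.2.1.lt_or_eq).imp_right fun hk => ?_
  obtain ⟨w, hw, hwA⟩ := exists_insert_of_not_lockedIn h.2.2 hk.symm h.1 subset_union_left
  obtain ⟨hwAB, hwA'⟩ := mem_sdiff.1 hw
  exact ⟨w, mem_sdiff.2 ⟨(mem_union.1 hwAB).resolve_left hwA', hwA'⟩, hwA⟩

end Locking

section Distance
variable [DecidableEq V] {G : SimpleGraph V} {c k n : ℕ} {A B S S' : Finset V}

lemma tarPath_of_insert
    (IH : ∀ A' B', #(A' ∆ B') < n → Unlocked G c k A' B' → Unlocked G c k B' A' →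
      TARPath G c k A' B' #(A' ∆ B'))
    (hn : #(A ∆ B) = n) (hA : Unlocked G c k A B) (hB : Unlocked G c k B A) {w : V}
    (hw : w ∈ B \ A) (hwA : ColSet G c (insert w A)) : TARPath G c k A B n := by
  obtain ⟨hwB, hwA'⟩ := mem_sdiff.1 hw
  have hcard := card_symmDiff_insert_of_mem hwA' hwB
  have hk : k < #(insert w A) := by
    rw [card_insert_of_notMem hwA']; exact Nat.lt_succ_of_le hA.2.1
  have hpath := IH _ _ (by omega) (unlocked_of_lt hwA hk) (hB.mono_right (subset_insert w A))
  rw [← hn, ← hcard]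
  exact hpath.cons (tarStep_insert hA.1 hA.2.1 hwA' hwA)

lemma tarPath_of_exchange {l r : V → ℝ} (hG : IsIntervalModel G l r)
    (IH : ∀ A' B', #(A' ∆ B') < n → Unlocked G c k A' B' → Unlocked G c k B' A' →
      TARPath G c k A' B' #(A' ∆ B'))
    (hn : #(A ∆ B) = n) (hA : ColSet G c A) (hB : ColSet G c B) (hkA : k < #A) (hkB : k < #B)
    {z : V} (hzB : z ∈ B) (hzA : z ∉ A) (hz : ¬ ColSet G c (insert z A))
    (hmin : ∀ y ∈ A \ B, r z ≤ r y) : TARPath G c k A B n := by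
  simp only [colSet_iff_depth_le hG] at hz
  obtain ⟨a, ha, haz⟩ := exists_exchange ((colSet_iff_depth_le hG).1 hA)
    ((colSet_iff_depth_le hG).1 hB) hzB hzA hz hmin
  rw [← colSet_iff_depth_le hG] at haz
  obtain ⟨haA, haB⟩ := mem_sdiff.1 ha
  have hzA' : z ∉ A.erase a := fun h => hzA (mem_of_mem_erase h)
  have hcard := card_symmDiff_insert_of_mem hzA' hzB
  have hcard' := card_symmDiff_erase_of_notMem haA haB
  have herase := card_erase_add_one haA
  have hk : k < #(insert z (A.erase a)) := by rw [card_insert_of_notMem hzA']; omega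
  have hpath := IH _ B (by omega) (unlocked_of_lt haz hk) (unlocked_of_lt hB hkB)
  rw [← hn, ← hcard', ← hcard]
  exact (hpath.cons (tarStep_insert (hA.mono (erase_subset a A)) (by omega) hzA' haz)).cons
    (tarStep_erase hA hkA haA)

theorem tarPath_of_unlocked (hG : IsIntervalGraph G) (hA : Unlocked G c k A B)
    (hB : Unlocked G c k B A) : TARPath G c k A B #(A ∆ B) := by
  obtain ⟨l, r, hG⟩ := hG
  induction hn : #(A ∆ B) using Nat.strong_induction_on generalizing A B with
  | _ n IH =>
  have IH' : ∀ A' B', #(A' ∆ B') < n → Unlocked G c k A' B' → Unlocked G c k B' A' →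
      TARPath G c k A' B' #(A' ∆ B') := fun A' B' h hA' hB' => IH _ h hA' hB' rfl
  have hn' : #(B ∆ A) = n := by rwa [symmDiff_comm]
  by_cases hAB : A = B
  · subst hAB hn
    simpa using TARPath.refl
  by_cases hinsA : ∃ w ∈ B \ A, ColSet G c (insert w A)
  · obtain ⟨w, hw, hwA⟩ := hinsA
    exact tarPath_of_insert IH' hn hA hB hw hwA
  by_cases hinsB : ∃ a ∈ A \ B, ColSet G c (insert a B)
  · obtain ⟨a, ha, haB⟩ := hinsB
    exact (tarPath_of_insert IH' hn' hB hA ha haB).symm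
  have hkA := hA.lt_or_exists_insert.resolve_right hinsA
  have hkB := hB.lt_or_exists_insert.resolve_right hinsB
  obtain ⟨z, hz, hzmin⟩ := exists_min_image (A ∆ B) r
    (nonempty_iff_ne_empty.2 fun h => hAB (symmDiff_eq_empty.1 h))
  rcases mem_symmDiff.1 hz with ⟨hzA, hzB⟩ | ⟨hzB, hzA⟩
  · refine (tarPath_of_exchange hG IH' hn' hB.1 hA.1 hkB hkA hzA hzB
      (fun h => hinsB ⟨z, mem_sdiff.2 ⟨hzA, hzB⟩, h⟩) fun y hy => ?_).symm
    exact hzmin y (mem_symmDiff.2 (Or.inr (mem_sdiff.1 hy)))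
  · refine tarPath_of_exchange hG IH' hn hA.1 hB.1 hkA hkB hzB hzA
      (fun h => hinsA ⟨z, mem_sdiff.2 ⟨hzB, hzA⟩, h⟩) fun y hy => ?_
    exact hzmin y (mem_symmDiff.2 (Or.inl (mem_sdiff.1 hy)))

lemma tarPath_of_lockedIn [Fintype V] (hG : IsIntervalGraph G) (hS' : ColSet G c S')
    (hk' : k ≤ #S') (hnl : ¬ Locked G c k S) (hlk : LockedIn G c k (S ∪ S') S)
    (hnlk' : ¬ LockedIn G c k (S ∪ S') S') : TARPath G c k S S' (#(S ∆ S') + 2) := by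
  obtain ⟨v, hv, hvS⟩ := exists_insert_of_not_lockedIn hnl hlk.1 hlk.2.1 (subset_univ S)
  have hvS₀ : v ∉ S := (mem_sdiff.1 hv).2
  have hk : k < #(insert v S) := by rw [card_insert_of_notMem hvS₀, hlk.1]; omega
  have hS'v : Unlocked G c k S' (insert v S) :=
    Unlocked.mono_right ⟨hS', hk', by rwa [union_comm]⟩ (subset_insert v S)
  have hpath := tarPath_of_unlocked hG (unlocked_of_lt hvS hk) hS'v
  rw [card_symmDiff_insert_of_notMem hvS₀ (hlk.notMem_of_colSet_insert hvS₀ hvS)] at hpath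
  exact hpath.cons (tarStep_insert hlk.2.1 hlk.1.ge hvS₀ hvS)

lemma tarDist_eq_of_lockedIn [Fintype V] (hG : IsIntervalGraph G) (hne : S ≠ S')
    (hS' : ColSet G c S') (hk' : k ≤ #S') (hnl : ¬ Locked G c k S)
    (hlk : LockedIn G c k (S ∪ S') S) (hnlk' : ¬ LockedIn G c k (S ∪ S') S') :
    TARDist G c k S S' = #(S ∆ S') + 2 := by
  refine le_antisymm ?_ ?_
  · exact_mod_cast (tarPath_of_lockedIn hG hS' hk' hnl hlk hnlk').tarDist_le
  · exact_mod_cast le_tarDist fun L hL => by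
      have := hlk.card_symmDiff_add_three_le_length hne hL
      omega

end Distance

theorem interval_dist_one_locked {V : Type*} [Fintype V] [DecidableEq V]
    (G : SimpleGraph V) (hG : IsIntervalGraph G) (c k : ℕ) (S S' : Finset V)
    (hne : S ≠ S') (hS : ColSet G c S) (hS' : ColSet G c S')
    (hk : k ≤ S.card) (hk' : k ≤ S'.card)
    (hnlG : ¬ Locked G c k S) (hnlG' : ¬ Locked G c k S')
    (hone : (LockedIn G c k (S ∪ S') S ∧ ¬ LockedIn G c k (S ∪ S') S') ∨
            (¬ LockedIn G c k (S ∪ S') S ∧ LockedIn G c k (S ∪ S') S')) :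
    TARDist G c k S S' = ((symmDiff S S').card : ℕ∞) + 2 := by
  rcases hone with ⟨hlk, hnlk'⟩ | ⟨hnlk, hlk'⟩
  · exact tarDist_eq_of_lockedIn hG hne hS' hk' hnlG hlk hnlk'
  · rw [union_comm] at hnlk hlk'
    rw [tarDist_comm, symmDiff_comm]
    exact tarDist_eq_of_lockedIn hG hne.symm hS hk hnlG' hlk' hnlk
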